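/- In the exponential lower-bound instance with parameter n ≥ 2, let σ be any schedule in which jobs ℓ, a₂, b₁, c₁ are on machine 1 and jobs a₁, b₂, c₂ are on machine 2 (the remaining jobs assigned arbitrarily). Let σ'' be obtained from σ by moving a₂ to machine 2 and moving a₁ and b₂ to machine 1, and let σ' be obtained from σ'' by moving b₁ and c₁ to machine 2 and moving c₂ to machine 1, all other jobs unchanged. Then each of the two steps changes the assignment of exactly 3 jobs, Cmax σ'' < Cmax σ, and Cmax σ' < Cmax σ''; in σ', jobs a₁, b₂, c₂ are on machine 1 and jobs a₂, b₁, c₁ are on machine 2. -/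

import Mathlib

/-- The jobs of the exponential lower-bound instance with parameter `n`:
jobs `a i`, `b i`, `c i` for each `i : Fin n` (`i` standing for the 1-based index
`i + 1`), together with the large job `l`. -/
inductive LBJob (n : ℕ) where
  | a (i : Fin n)
  | b (i : Fin n)
  | c (i : Fin n)
  | l
  deriving DecidableEq, Fintype

/-- Processing times of the lower-bound instance: with 1-based index `i' = i + 1`,
`p (a i') = 2^(n+i'+1) + 2^(i'-1)`, `p (b i') = 2^(n+i')`,
`p (c i') = 2^(n+i'-1) + 2^(i'-1)`, and `p l = 2^(2n+4)`. -/
def lbp (n : ℕ) : LBJob n → ℕ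
  | .a i => 2 ^ (n + i.1 + 2) + 2 ^ i.1
  | .b i => 2 ^ (n + i.1 + 1)
  | .c i => 2 ^ (n + i.1) + 2 ^ i.1
  | .l => 2 ^ (2 * n + 4)

/-- Load of a machine (`false` = machine 1, `true` = machine 2). -/
def lbLoad (n : ℕ) (m : Bool) (σ : LBJob n → Bool) : ℕ :=
  ∑ j ∈ Finset.univ.filter (fun j => σ j = m), lbp n j

/-- Makespan of a schedule of the lower-bound instance. -/
def lbCmax (n : ℕ) (σ : LBJob n → Bool) : ℕ :=
  max (lbLoad n false σ) (lbLoad n true σ)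

/-!
The job `ℓ` outweighs all other jobs together (`∑ p < 2 p(ℓ)`), so as long as `ℓ` stays on
machine 1 the makespan is the load of machine 1. Each step changes that load by a signed sum
of three processing times: the first step lowers it by `p(a₂) - p(a₁) - p(b₂) = 1`, the second
by `p(b₁) + p(c₁) - p(c₂) = 2ⁿ - 1`.
-/

open Finset

section Reassignment

variable {α β : Type*} [Fintype α] [DecidableEq β] {σ τ : α → β} {S : Finset α}

theorem sum_filter_add_sum_filter_eq_of_eqOn_compl {M : Type*} [DecidableEq α] [AddCommMonoid M]
    (p : α → M) (hout : ∀ j ∉ S, σ j = τ j) (m : β) :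
    ∑ j ∈ univ.filter (σ · = m), p j + ∑ j ∈ S.filter (τ · = m), p j =
      ∑ j ∈ univ.filter (τ · = m), p j + ∑ j ∈ S.filter (σ · = m), p j := by
  have hcompl :
      ∑ j ∈ Sᶜ, (if σ j = m then p j else 0) = ∑ j ∈ Sᶜ, (if τ j = m then p j else 0) :=
    sum_congr rfl fun j hj => by rw [hout j (mem_compl.mp hj)]
  simp only [sum_filter, ← sum_add_sum_compl S (fun j => if σ j = m then p j else 0),
    ← sum_add_sum_compl S (fun j => if τ j = m then p j else 0), hcompl]
  abel

theorem filter_ne_eq_of_eqOn_compl (hout : ∀ j ∉ S, σ j = τ j)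
    (hin : ∀ j ∈ S, σ j ≠ τ j) : univ.filter (fun j => σ j ≠ τ j) = S := by
  ext j
  by_cases hj : j ∈ S <;> simp [hj, hin, hout]

end Reassignment

theorem forall_notMem_triple_eq {α β : Type*} [DecidableEq α] {σ τ : α → β} {x y z : α}
    (h : ∀ j, j ≠ x → j ≠ y → j ≠ z → τ j = σ j) :
    ∀ j ∉ ({x, y, z} : Finset α), σ j = τ j := by
  intro j hj
  simp only [mem_insert, mem_singleton, not_or] at hj
  exact (h j hj.1 hj.2.1 hj.2.2).symm

section TripleMove

variable {α β : Type*} [Fintype α] [DecidableEq α] [DecidableEq β] {σ τ : α → β}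
  {x y z : α}

theorem card_filter_ne_eq_three (hxy : x ≠ y) (hxz : x ≠ z) (hyz : y ≠ z)
    (hout : ∀ j ∉ ({x, y, z} : Finset α), σ j = τ j)
    (hx : σ x ≠ τ x) (hy : σ y ≠ τ y) (hz : σ z ≠ τ z) :
    #(univ.filter fun j => σ j ≠ τ j) = 3 := by
  rw [filter_ne_eq_of_eqOn_compl hout (by simp [hx, hy, hz])]
  exact card_eq_three.mpr ⟨x, y, z, hxy, hxz, hyz, rfl⟩

theorem sum_filter_add_eq_of_triple_move {M : Type*} [AddCommMonoid M] (p : α → M) {m : β}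
    (hyz : y ≠ z) (hout : ∀ j ∉ ({x, y, z} : Finset α), σ j = τ j)
    (hx : σ x = m) (hx' : τ x ≠ m) (hy : σ y ≠ m) (hy' : τ y = m)
    (hz : σ z ≠ m) (hz' : τ z = m) :
    ∑ j ∈ univ.filter (σ · = m), p j + (p y + p z) =
      ∑ j ∈ univ.filter (τ · = m), p j + p x := by
  have := sum_filter_add_sum_filter_eq_of_eqOn_compl p hout m
  rwa [filter_insert, if_neg hx', filter_insert, if_pos hy', filter_singleton, if_pos hz',
    sum_insert (by simpa using hyz), sum_singleton, filter_insert, if_pos hx, filter_insert,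
    if_neg hy, filter_singleton, if_neg hz, insert_empty_eq, sum_singleton] at this

end TripleMove

namespace LBJob

def equivSum (n : ℕ) : LBJob n ≃ Fin n ⊕ Fin n ⊕ Fin n ⊕ Unit where
  toFun
    | .a i => .inl i
    | .b i => .inr (.inl i)
    | .c i => .inr (.inr (.inl i))
    | .l => .inr (.inr (.inr ()))
  invFun
    | .inl i => .a i
    | .inr (.inl i) => .b i
    | .inr (.inr (.inl i)) => .c i
    | .inr (.inr (.inr _)) => .l
  left_inv j := by cases j <;> rfl
  right_inv x := by rcases x with i | i | i | ⟨⟩ <;> rfl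

theorem sum_univ {M : Type*} {n : ℕ} [AddCommMonoid M] (f : LBJob n → M) :
    ∑ j, f j = ∑ i, (f (a i) + f (b i) + f (c i)) + f l := by
  rw [← (equivSum n).symm.sum_comp]
  simp [Fintype.sum_sum_type, sum_add_distrib, equivSum, add_assoc]

end LBJob

theorem sum_lbp_lt_two_mul (n : ℕ) : ∑ j, lbp n j < 2 * lbp n .l := by
  have hterm (i : Fin n) :
      lbp n (.a i) + lbp n (.b i) + lbp n (.c i) ≤ 2 ^ (n + 3) * 2 ^ i.1 := by
    have hx : 2 ≤ 2 ^ n := Nat.le_self_pow i.pos.ne' 2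
    simp only [lbp, pow_add, pow_succ]
    nlinarith [Nat.mul_le_mul_right (2 ^ i.1) hx]
  have hgeom : ∑ i : Fin n, 2 ^ i.1 < 2 ^ n := by
    rw [Fin.sum_univ_eq_sum_range (2 ^ ·)]
    exact Nat.geomSum_lt le_rfl fun k hk => mem_range.mp hk
  calc ∑ j, lbp n j ≤ 2 ^ (n + 3) * ∑ i : Fin n, 2 ^ i.1 + lbp n .l := by
        rw [LBJob.sum_univ, mul_sum]; gcongr with i; exact hterm i
    _ < 2 ^ (n + 3) * 2 ^ n + lbp n .l := by gcongr
    _ ≤ 2 * lbp n .l := by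
        have : 2 ^ (n + 3 + n) ≤ 2 ^ (2 * n + 4) := Nat.pow_le_pow_right two_pos (by omega)
        rw [← pow_add, lbp]
        omega

theorem lbLoad_add_lbLoad (n : ℕ) (σ : LBJob n → Bool) :
    lbLoad n false σ + lbLoad n true σ = ∑ j, lbp n j := by
  rw [← sum_filter_add_sum_filter_not univ (σ · = false)]
  simp only [lbLoad, Bool.not_eq_false]

theorem lbCmax_eq_lbLoad_false {n : ℕ} {σ : LBJob n → Bool} (hl : σ .l = false) :
    lbCmax n σ = lbLoad n false σ := by
  have hbig : lbp n .l ≤ lbLoad n false σ :=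
    single_le_sum (fun _ _ => Nat.zero_le _) (mem_filter.mpr ⟨mem_univ _, hl⟩)
  have := lbLoad_add_lbLoad n σ
  have := sum_lbp_lt_two_mul n
  exact max_eq_left (by omega)

theorem lbp_a_add_lbp_b_add_one {n : ℕ} {i1 i2 : Fin n} (hi1 : i1.1 = 0) (hi2 : i2.1 = 1) :
    lbp n (.a i1) + lbp n (.b i2) + 1 = lbp n (.a i2) := by
  simp only [lbp, hi1, hi2, add_zero, pow_succ]
  omega

theorem lbp_c_add_two_pow {n : ℕ} {i1 i2 : Fin n} (hi1 : i1.1 = 0) (hi2 : i2.1 = 1) :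
    lbp n (.c i2) + 2 ^ n = lbp n (.b i1) + lbp n (.c i1) + 1 := by
  simp only [lbp, hi1, hi2, add_zero, pow_succ]
  omega

theorem lb_second_swap_general (n : ℕ)
    (i1 i2 : Fin n) (hi1 : i1.1 = 0) (hi2 : i2.1 = 1)
    (σ σ'' σ' : LBJob n → Bool)
    (hl : σ .l = false)
    (ha2 : σ (.a i2) = false) (hb1 : σ (.b i1) = false) (hc1 : σ (.c i1) = false)
    (ha1 : σ (.a i1) = true) (hb2 : σ (.b i2) = true) (hc2 : σ (.c i2) = true)
    (h''a2 : σ'' (.a i2) = true) (h''a1 : σ'' (.a i1) = false) (h''b2 : σ'' (.b i2) = false)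
    (h''rest : ∀ j : LBJob n, j ≠ .a i2 → j ≠ .a i1 → j ≠ .b i2 → σ'' j = σ j)
    (h'b1 : σ' (.b i1) = true) (h'c1 : σ' (.c i1) = true) (h'c2 : σ' (.c i2) = false)
    (h'rest : ∀ j : LBJob n, j ≠ .b i1 → j ≠ .c i1 → j ≠ .c i2 → σ' j = σ'' j) :
    (Finset.univ.filter (fun j => σ j ≠ σ'' j)).card = 3 ∧
    (Finset.univ.filter (fun j => σ'' j ≠ σ' j)).card = 3 ∧
    lbCmax n σ'' < lbCmax n σ ∧
    lbCmax n σ' < lbCmax n σ'' ∧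
    σ' (.a i1) = false ∧ σ' (.b i2) = false ∧ σ' (.c i2) = false ∧
    σ' (.a i2) = true ∧ σ' (.b i1) = true ∧ σ' (.c i1) = true := by
  have hi : i1 ≠ i2 := Fin.ne_of_val_ne (by omega)
  have hout₁ := forall_notMem_triple_eq h''rest
  have hout₂ := forall_notMem_triple_eq h'rest
  have h''l : σ'' .l = false := (hout₁ _ (by simp)).symm.trans hl
  have h''b1 : σ'' (.b i1) = false := (hout₁ _ (by simp [hi])).symm.trans hb1
  have h''c1 : σ'' (.c i1) = false := (hout₁ _ (by simp)).symm.trans hc1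
  have h''c2 : σ'' (.c i2) = true := (hout₁ _ (by simp)).symm.trans hc2
  have h'l : σ' .l = false := (hout₂ _ (by simp)).symm.trans h''l
  have h'a1 : σ' (.a i1) = false := (hout₂ _ (by simp)).symm.trans h''a1
  have h'a2 : σ' (.a i2) = true := (hout₂ _ (by simp)).symm.trans h''a2
  have h'b2 : σ' (.b i2) = false := (hout₂ _ (by simp [hi.symm])).symm.trans h''b2
  have hload₁ : lbLoad n false σ + (lbp n (.a i1) + lbp n (.b i2)) =
      lbLoad n false σ'' + lbp n (.a i2) :=
    sum_filter_add_eq_of_triple_move (lbp n) (by simp) hout₁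
      ha2 (by simp [h''a2]) (by simp [ha1]) h''a1 (by simp [hb2]) h''b2
  have hload₂ : lbLoad n false σ' + (lbp n (.b i1) + lbp n (.c i1)) =
      lbLoad n false σ'' + lbp n (.c i2) :=
    sum_filter_add_eq_of_triple_move (lbp n) (by simp)
      (forall_notMem_triple_eq fun j hc2 hb1 hc1 => (h'rest j hb1 hc1 hc2).symm)
      h'c2 (by simp [h''c2]) (by simp [h'b1]) h''b1 (by simp [h'c1]) h''c1
  refine ⟨card_filter_ne_eq_three (by simp [hi.symm]) (by simp) (by simp) hout₁
      (by simp [ha2, h''a2]) (by simp [ha1, h''a1]) (by simp [hb2, h''b2]),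
    card_filter_ne_eq_three (by simp) (by simp) (by simp [hi]) hout₂
      (by simp [h''b1, h'b1]) (by simp [h''c1, h'c1]) (by simp [h''c2, h'c2]),
    ?_, ?_, h'a1, h'b2, h'c2, h'a2, h'b1, h'c1⟩
  · rw [lbCmax_eq_lbLoad_false hl, lbCmax_eq_lbLoad_false h''l]
    have := lbp_a_add_lbp_b_add_one hi1 hi2
    omega
  · rw [lbCmax_eq_lbLoad_false h''l, lbCmax_eq_lbLoad_false h'l]
    have := lbp_c_add_two_pow hi1 hi2
    have : 2 ≤ 2 ^ n := Nat.le_self_pow i1.pos.ne' 2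
    omega

/-- Lemma (swapping back the first triple while moving the second): if `ℓ, a₂, b₁, c₁`
are on machine 1 and `a₁, b₂, c₂` are on machine 2, then the 3-swap moving `a₂` to
machine 2 and `a₁, b₂` to machine 1, followed by the 3-swap moving `b₁, c₁` to
machine 2 and `c₂` to machine 1, each change exactly 3 jobs and each strictly
decreases the makespan; afterwards `a₁, b₂, c₂` are on machine 1 and `a₂, b₁, c₁` are
on machine 2. -/
theorem lb_second_swap (n : ℕ) (hn : 2 ≤ n)
    (i1 i2 : Fin n) (hi1 : i1.1 = 0) (hi2 : i2.1 = 1)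
    (σ σ'' σ' : LBJob n → Bool)
    (hl : σ .l = false)
    (ha2 : σ (.a i2) = false) (hb1 : σ (.b i1) = false) (hc1 : σ (.c i1) = false)
    (ha1 : σ (.a i1) = true) (hb2 : σ (.b i2) = true) (hc2 : σ (.c i2) = true)
    (h''a2 : σ'' (.a i2) = true) (h''a1 : σ'' (.a i1) = false) (h''b2 : σ'' (.b i2) = false)
    (h''rest : ∀ j : LBJob n, j ≠ .a i2 → j ≠ .a i1 → j ≠ .b i2 → σ'' j = σ j)
    (h'b1 : σ' (.b i1) = true) (h'c1 : σ' (.c i1) = true) (h'c2 : σ' (.c i2) = false)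
    (h'rest : ∀ j : LBJob n, j ≠ .b i1 → j ≠ .c i1 → j ≠ .c i2 → σ' j = σ'' j) :
    (Finset.univ.filter (fun j => σ j ≠ σ'' j)).card = 3 ∧
    (Finset.univ.filter (fun j => σ'' j ≠ σ' j)).card = 3 ∧
    lbCmax n σ'' < lbCmax n σ ∧
    lbCmax n σ' < lbCmax n σ'' ∧
    σ' (.a i1) = false ∧ σ' (.b i2) = false ∧ σ' (.c i2) = false ∧
    σ' (.a i2) = true ∧ σ' (.b i1) = true ∧ σ' (.c i1) = true :=
  lb_second_swap_general n i1 i2 hi1 hi2 σ σ'' σ' hl ha2 hb1 hc1 ha1 hb2 hc2 h''a2 h''a1 h''b2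
    h''rest h'b1 h'c1 h'c2 h'rest
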